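/- arXiv:2409.11998 — 4 statements merged into one kernel-verified Lean document; each statement's English description precedes it below -/
import Mathlib

section
/- Let f : ℝ² → ℝ be continuous with compact support and suppose ∫_{ℝ²} f(y) dy = 0. Then for every x ∈ ℝ², the limit lim_{T→∞} ∫_0^T ∫_{ℝ²} exp(-‖x-y‖²/(4t))/(4πt) · f(y) dy dt exists and equals the volume potential ∫_{ℝ²} (-(1/(2π)) log‖x-y‖) f(y) dy. In other words, for mean-zero sources the harmonic volume potential is the steady-state (infinite-time) limit of the volume heat potential. -/
open MeasureTheory Set

namespace VHPaux

noncomputable def phi (s : ℝ) : ℝ := (1 - Real.exp (-s)) / s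

lemma phi_nonneg {s : ℝ} (hs : 0 ≤ s) : 0 ≤ phi s := by
  rcases eq_or_lt_of_le hs with h | h
  · simp [phi, ← h]
  · apply div_nonneg _ h.le
    have : Real.exp (-s) ≤ 1 := Real.exp_le_one_iff.2 (by linarith)
    linarith

lemma phi_le_one {s : ℝ} (hs : 0 ≤ s) : phi s ≤ 1 := by
  rcases eq_or_lt_of_le hs with h | h
  · simp [phi, ← h]
  · rw [phi, div_le_one h]
    have := Real.add_one_le_exp (-s)
    linarith

lemma phi_abs_le (s : ℝ) : |phi s| ≤ Real.exp |s| := by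
  rcases lt_trichotomy s 0 with h | h | h
  · have h1 : phi s = (Real.exp (-s) - 1) / (-s) := by
      rw [phi]; rw [div_eq_div_iff h.ne (neg_ne_zero.2 h.ne)]; ring
    have h2 : 0 < -s := by linarith
    have h3 : Real.exp (-s) - 1 ≤ (-s) * Real.exp (-s) := by
      have hadd := Real.add_one_le_exp s
      have hmul : Real.exp s * Real.exp (-s) = 1 := by rw [← Real.exp_add]; simp
      nlinarith [Real.exp_pos s, Real.exp_pos (-s)]
    have h5 : 0 ≤ phi s := by
      rw [h1]; apply div_nonneg _ h2.le
      have : (1:ℝ) ≤ Real.exp (-s) := Real.one_le_exp_iff.2 (by linarith)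
      linarith
    rw [abs_of_nonneg h5, h1, abs_of_neg h, div_le_iff₀ h2]
    nlinarith
  · subst h; norm_num [phi]
  · rw [abs_of_nonneg (phi_nonneg h.le)]
    calc phi s ≤ 1 := phi_le_one h.le
    _ ≤ Real.exp |s| := by rw [← Real.exp_zero]; exact Real.exp_le_exp.2 (abs_nonneg s)

lemma phi_measurable : Measurable phi :=
  ((measurable_const.sub (Real.measurable_exp.comp measurable_neg)).div measurable_id)

lemma phi_intervalIntegrable (a b : ℝ) : IntervalIntegrable phi volume a b := by
  rw [intervalIntegrable_iff]
  apply Integrable.mono' (g := fun _ => Real.exp (max |a| |b|))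
    (integrableOn_const measure_Ioc_lt_top.ne)
    phi_measurable.aestronglyMeasurable
  filter_upwards [ae_restrict_mem measurableSet_Ioc] with s hs
  calc ‖phi s‖ ≤ Real.exp |s| := phi_abs_le s
  _ ≤ Real.exp (max |a| |b|) := by
      apply Real.exp_le_exp.2
      rcases hs with ⟨h1, h2⟩
      rw [abs_le]
      constructor
      · calc -(max |a| |b|) ≤ -|min a b| := by
              simp only [neg_le_neg_iff]
              rcases min_cases a b with ⟨h, _⟩ | ⟨h, _⟩ <;> rw [h] <;> simp [le_max_iff, le_refl]
        _ ≤ min a b := neg_abs_le _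
        _ ≤ s := h1.le
      · calc s ≤ max a b := h2
        _ ≤ |max a b| := le_abs_self _
        _ ≤ max |a| |b| := abs_max_le_max_abs_abs

noncomputable def H (u : ℝ) : ℝ := ∫ s in (0:ℝ)..u, phi s

lemma H_continuous : Continuous H :=
  intervalIntegral.continuous_primitive (fun a b => phi_intervalIntegrable a b) 0

lemma H_nonneg {u : ℝ} (hu : 0 ≤ u) : 0 ≤ H u :=
  intervalIntegral.integral_nonneg hu (fun s hs => phi_nonneg hs.1)

lemma H_le {u : ℝ} (hu : 0 ≤ u) : H u ≤ u := by
  have : H u ≤ ∫ _ in (0:ℝ)..u, (1:ℝ) := by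
    apply intervalIntegral.integral_mono_on hu (phi_intervalIntegrable 0 u)
      intervalIntegrable_const
    exact fun s hs => phi_le_one hs.1
  simpa using this

lemma H_sub {ε : ℝ} (hε : 0 < ε) : ∫ s in ε..1, phi s = H 1 - H ε := by
  have := intervalIntegral.integral_add_adjacent_intervals
    (phi_intervalIntegrable 0 ε) (phi_intervalIntegrable ε 1)
  rw [H, H]; linarith [this]

noncomputable def Efun (ε : ℝ) : ℝ := ∫ s in Set.Ioi ε, Real.exp (-s) / s

lemma expdiv_integrableOn {ε : ℝ} (hε : 0 < ε) :
    IntegrableOn (fun s => Real.exp (-s) / s) (Set.Ioi ε) := by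
  apply Integrable.mono' (g := fun s => Real.exp (-s) * ε⁻¹)
  · have : IntegrableOn (fun s => Real.exp (-(1:ℝ) * s)) (Set.Ioi ε) :=
      exp_neg_integrableOn_Ioi ε one_pos
    exact (this.congr_fun (fun s _ => by norm_num) measurableSet_Ioi).mul_const _
  · exact ((Real.measurable_exp.comp measurable_neg).div measurable_id).aestronglyMeasurable
  · filter_upwards [ae_restrict_mem measurableSet_Ioi] with s hs
    have hs0 : 0 < s := hε.trans hs
    rw [Real.norm_eq_abs, abs_of_nonneg (by positivity)]
    rw [div_eq_mul_inv]
    exact mul_le_mul_of_nonneg_left (by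
      exact inv_anti₀ hε hs.le) (Real.exp_pos _).le

lemma expdiv_intervalIntegrable {a b : ℝ} (ha : 0 < a) (hb : 0 < b) :
    IntervalIntegrable (fun s => Real.exp (-s) / s) volume a b := by
  apply ContinuousOn.intervalIntegrable
  apply ContinuousOn.div
  · exact (Real.continuous_exp.comp continuous_neg).continuousOn
  · exact continuousOn_id
  · intro s hs
    rcases hs with ⟨h1, _⟩
    have : 0 < min a b := lt_min ha hb
    exact (this.trans_le h1).ne'

lemma Efun_sub {ε : ℝ} (hε : 0 < ε) : Efun ε - Efun 1 = ∫ s in ε..1, Real.exp (-s) / s := by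
  rcases le_or_gt ε 1 with h | h
  · have hunion : Set.Ioc ε 1 ∪ Set.Ioi 1 = Set.Ioi ε := Set.Ioc_union_Ioi_eq_Ioi h
    have := setIntegral_union (Set.Ioc_disjoint_Ioi le_rfl) measurableSet_Ioi
      ((expdiv_integrableOn hε).mono_set (fun s hs => hs.1))
      (expdiv_integrableOn one_pos) (f := fun s => Real.exp (-s) / s) (μ := volume)
    rw [hunion] at this
    rw [intervalIntegral.integral_of_le h, Efun, Efun, this]
    ring
  · have hunion : Set.Ioc 1 ε ∪ Set.Ioi ε = Set.Ioi 1 := Set.Ioc_union_Ioi_eq_Ioi h.le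
    have := setIntegral_union (Set.Ioc_disjoint_Ioi le_rfl) measurableSet_Ioi
      ((expdiv_integrableOn one_pos).mono_set (fun s hs => hs.1))
      (expdiv_integrableOn hε) (f := fun s => Real.exp (-s) / s) (μ := volume)
    rw [hunion] at this
    rw [intervalIntegral.integral_symm, intervalIntegral.integral_of_le h.le, Efun, Efun, this]
    ring

lemma Efun_eq {ε : ℝ} (hε : 0 < ε) : Efun ε = Efun 1 - Real.log ε - H 1 + H ε := by
  have h1 : ∫ s in ε..1, Real.exp (-s) / s = (∫ s in ε..1, 1 / s) - ∫ s in ε..1, phi s := by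
    rw [← intervalIntegral.integral_sub]
    · apply intervalIntegral.integral_congr
      intro s hs
      have hs0 : 0 < s := by
        rcases hs with ⟨h1, _⟩
        have : 0 < min ε 1 := lt_min hε one_pos
        exact this.trans_le h1
      simp only [phi]
      field_simp
      ring
    · apply ContinuousOn.intervalIntegrable
      apply ContinuousOn.div continuousOn_const continuousOn_id
      intro s hs
      have : 0 < min ε 1 := lt_min hε one_pos
      exact (this.trans_le hs.1).ne'
    · exact phi_intervalIntegrable ε 1
  have h2 : ∫ s in ε..1, (1:ℝ) / s = Real.log (1 / ε) := integral_one_div (by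
    intro h
    rcases h with ⟨h1, _⟩
    have : 0 < min ε 1 := lt_min hε one_pos
    exact absurd rfl (this.trans_le h1).ne')
  have h3 := Efun_sub hε
  have h4 := H_sub hε
  rw [h1, h2, h4] at h3
  rw [Real.log_div one_ne_zero hε.ne', Real.log_one] at h3
  linarith

lemma time_change {a T : ℝ} (ha : 0 < a) (hT : 0 < T) :
    ∫ t in Set.Ioc 0 T, Real.exp (-(a / t)) / t = Efun (a / T) := by
  have himg : (fun t => a / t) '' Set.Ioo 0 T = Set.Ioi (a / T) := by
    ext s
    constructor
    · rintro ⟨t, ⟨ht0, htT⟩, rfl⟩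
      exact div_lt_div_of_pos_left ha ht0 htT
    · intro hs
      have hs' : a / T < s := hs
      have hs0 : 0 < s := (div_pos ha hT).trans hs'
      refine ⟨a / s, ⟨div_pos ha hs0, ?_⟩, ?_⟩
      · rw [div_lt_iff₀ hs0]
        have := (div_lt_iff₀ hT).1 hs'
        linarith
      · field_simp
  have hderiv : ∀ t ∈ Set.Ioo (0:ℝ) T,
      HasDerivWithinAt (fun t => a / t) (-(a / t ^ 2)) (Set.Ioo 0 T) t := by
    intro t ht
    have h1 : HasDerivAt (fun t : ℝ => a * t⁻¹) (a * -(t ^ 2)⁻¹) t :=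
      (hasDerivAt_inv ht.1.ne').const_mul a
    have h2 : HasDerivAt (fun t : ℝ => a / t) (-(a / t ^ 2)) t := by
      simpa [div_eq_mul_inv, mul_neg] using h1
    exact h2.hasDerivWithinAt
  have hinj : Set.InjOn (fun t => a / t) (Set.Ioo 0 T) := by
    intro t1 h1 t2 h2 h
    simp only at h
    rw [div_eq_div_iff h1.1.ne' h2.1.ne'] at h
    exact mul_left_cancel₀ ha.ne' h.symm
  calc ∫ t in Set.Ioc 0 T, Real.exp (-(a / t)) / t
      = ∫ t in Set.Ioo 0 T, Real.exp (-(a / t)) / t := integral_Ioc_eq_integral_Ioo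
    _ = ∫ t in Set.Ioo 0 T, |(-(a / t ^ 2))| • (Real.exp (-(a / t)) / (a / t)) := by
        apply setIntegral_congr_fun measurableSet_Ioo
        intro t ht
        simp only [smul_eq_mul]
        rw [abs_neg, abs_of_nonneg (by positivity : (0:ℝ) ≤ a / t ^ 2)]
        have ht0 : (0:ℝ) < t := ht.1
        field_simp
    _ = ∫ s in (fun t => a / t) '' Set.Ioo 0 T, Real.exp (-s) / s :=
        (MeasureTheory.integral_image_eq_integral_abs_deriv_smul measurableSet_Ioo hderiv hinj
          (fun s => Real.exp (-s) / s)).symm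
    _ = Efun (a / T) := by rw [himg]; rfl

lemma heat_time_integral {r T : ℝ} (hr : 0 < r) (hT : 0 < T) :
    ∫ t in Set.Ioc 0 T, Real.exp (-r ^ 2 / (4 * t)) / (4 * Real.pi * t)
      = (1 / (4 * Real.pi)) * (Efun 1 - H 1 + Real.log (4 * T))
        + (-(1 / (2 * Real.pi))) * Real.log r
        + (1 / (4 * Real.pi)) * H (r ^ 2 / (4 * T)) := by
  have ha : 0 < r ^ 2 / 4 := by positivity
  have h1 : ∀ t : ℝ, Real.exp (-r ^ 2 / (4 * t)) / (4 * Real.pi * t)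
      = (1 / (4 * Real.pi)) * (Real.exp (-(r ^ 2 / 4 / t)) / t) := by
    intro t
    have h : -r ^ 2 / (4 * t) = -(r ^ 2 / 4 / t) := by ring
    rw [h]; ring
  simp_rw [h1]
  rw [integral_const_mul, time_change ha hT]
  have hεpos : 0 < r ^ 2 / 4 / T := by positivity
  rw [Efun_eq hεpos]
  have hlog : Real.log (r ^ 2 / 4 / T) = 2 * Real.log r - Real.log (4 * T) := by
    rw [div_div, Real.log_div (by positivity : (0:ℝ) < r ^ 2).ne'
      (by positivity : (0:ℝ) < 4 * T).ne', Real.log_pow]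
    push_cast; ring
  have h2 : r ^ 2 / 4 / T = r ^ 2 / (4 * T) := by ring
  rw [hlog, h2]
  ring


noncomputable section

abbrev E2 := EuclideanSpace ℝ (Fin 2)

lemma kernel_meas (x : E2) :
    Measurable (fun p : ℝ × E2 =>
      Real.exp (-‖x - p.2‖ ^ 2 / (4 * p.1)) / (4 * Real.pi * p.1)) := by
  have h1 : Measurable fun p : ℝ × E2 => -‖x - p.2‖ ^ 2 :=
    (((continuous_const.sub continuous_snd).norm.pow 2).neg).measurable
  have h2 : Measurable fun p : ℝ × E2 => 4 * p.1 :=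
    (continuous_const.mul continuous_fst).measurable
  have h3 : Measurable fun p : ℝ × E2 => 4 * Real.pi * p.1 :=
    (continuous_const.mul continuous_fst).measurable
  exact (Real.measurable_exp.comp (h1.div h2)).div h3

lemma kernel_aesm (x : E2) {f : E2 → ℝ} (hf : Continuous f) (μ : Measure (ℝ × E2)) :
    AEStronglyMeasurable
      (fun p : ℝ × E2 =>
        Real.exp (-‖x - p.2‖ ^ 2 / (4 * p.1)) / (4 * Real.pi * p.1) * f p.2) μ :=
  ((kernel_meas x).mul (hf.measurable.comp measurable_snd)).aestronglyMeasurable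

lemma gaussian_integral_eq_one {t : ℝ} (ht : 0 < t) (x : E2) :
    ∫ y : E2, Real.exp (-‖x - y‖ ^ 2 / (4 * t)) / (4 * Real.pi * t) = 1 := by
  have hb : (0:ℝ) < (4 * t)⁻¹ := by positivity
  have h1 : ∀ y : E2, Real.exp (-‖x - y‖ ^ 2 / (4 * t)) / (4 * Real.pi * t)
      = (4 * Real.pi * t)⁻¹ * Real.exp (-(4 * t)⁻¹ * ‖x - y‖ ^ 2) := by
    intro y
    rw [show -‖x - y‖ ^ 2 / (4 * t) = -(4 * t)⁻¹ * ‖x - y‖ ^ 2 by ring]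
    ring
  simp_rw [h1]
  rw [integral_const_mul]
  have h2 : ∫ y : E2, Real.exp (-(4 * t)⁻¹ * ‖x - y‖ ^ 2)
      = ∫ y : E2, Real.exp (-(4 * t)⁻¹ * ‖y‖ ^ 2) :=
    integral_sub_left_eq_self (fun y : E2 => Real.exp (-(4 * t)⁻¹ * ‖y‖ ^ 2)) volume x
  rw [h2, GaussianFourier.integral_rexp_neg_mul_sq_norm hb]
  rw [show (Module.finrank ℝ E2 : ℝ) = 2 by rw [finrank_euclideanSpace_fin]; norm_num]
  norm_num
  have hπ := Real.pi_pos.ne'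
  field_simp

lemma gaussian_integrable {t : ℝ} (ht : 0 < t) (x : E2) :
    Integrable (fun y : E2 =>
      Real.exp (-‖x - y‖ ^ 2 / (4 * t)) / (4 * Real.pi * t)) := by
  have hb : (0:ℝ) < (4 * t)⁻¹ := by positivity
  have hint : Integrable (fun z : E2 => Real.exp (-(4 * t)⁻¹ * ‖z‖ ^ 2)) := by
    have hc := GaussianFourier.integrable_cexp_neg_mul_sq_norm_add
      (b := (((4 * t)⁻¹ : ℝ) : ℂ)) (by simpa using hb) 0 (0 : E2)
    apply hc.norm.congr
    filter_upwards with v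
    rw [Complex.norm_exp]
    congr 1
    have : -((((4 * t)⁻¹ : ℝ)) : ℂ) * (‖v‖ : ℂ) ^ 2 + 0 * (inner ℝ (0 : E2) v : ℝ)
        = ((-(4 * t)⁻¹ * ‖v‖ ^ 2 : ℝ) : ℂ) := by push_cast; ring
    rw [this, Complex.ofReal_re]
  have h1 : ∀ y : E2, Real.exp (-‖x - y‖ ^ 2 / (4 * t)) / (4 * Real.pi * t)
      = (4 * Real.pi * t)⁻¹ * Real.exp (-(4 * t)⁻¹ * ‖x - y‖ ^ 2) := by
    intro y
    rw [show -‖x - y‖ ^ 2 / (4 * t) = -(4 * t)⁻¹ * ‖x - y‖ ^ 2 by ring]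
    ring
  simp_rw [h1]
  apply Integrable.const_mul
  exact (integrable_comp_sub_left (fun z : E2 => Real.exp (-(4 * t)⁻¹ * ‖z‖ ^ 2)) x).2 hint

lemma kernel_section_integrable (x : E2) {f : E2 → ℝ} (hf : Continuous f)
    (hsupp : HasCompactSupport f) {t : ℝ} (ht : 0 < t) :
    Integrable (fun y : E2 =>
      Real.exp (-‖x - y‖ ^ 2 / (4 * t)) / (4 * Real.pi * t) * f y) := by
  apply Continuous.integrable_of_hasCompactSupport
  · exact ((Real.continuous_exp.comp
      (((continuous_const.sub continuous_id).norm.pow 2).neg.div_const (4 * t))).div_const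
      (4 * Real.pi * t)).mul hf
  · exact hsupp.mul_left

lemma kernel_cont (x : E2) {t : ℝ} (ht : 0 < t) :
    Continuous (fun y : E2 => Real.exp (-‖x - y‖ ^ 2 / (4 * t)) / (4 * Real.pi * t)) :=
  (Real.continuous_exp.comp
      (((continuous_const.sub continuous_id).norm.pow 2).neg.div_const (4 * t))).div_const
      (4 * Real.pi * t)

lemma kernel_nonneg (x : E2) (t : ℝ) (y : E2) (ht : 0 ≤ t) :
    0 ≤ Real.exp (-‖x - y‖ ^ 2 / (4 * t)) / (4 * Real.pi * t) := by
  apply div_nonneg (Real.exp_pos _).le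
  have := Real.pi_pos
  positivity

lemma kernel_prod_integrable (x : E2) {f : E2 → ℝ} (hf : Continuous f)
    (hsupp : HasCompactSupport f) {T : ℝ} (hT : 0 < T) {M : ℝ} (hM : ∀ y, ‖f y‖ ≤ M) :
    Integrable (fun p : ℝ × E2 =>
        Real.exp (-‖x - p.2‖ ^ 2 / (4 * p.1)) / (4 * Real.pi * p.1) * f p.2)
      ((volume.restrict (Set.Ioc 0 T)).prod volume) := by
  have hM0 : 0 ≤ M := le_trans (norm_nonneg _) (hM 0)
  rw [integrable_prod_iff (kernel_aesm x hf _)]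
  constructor
  · filter_upwards [ae_restrict_mem measurableSet_Ioc] with t htm
    exact kernel_section_integrable x hf hsupp htm.1
  · apply Integrable.mono' (g := fun _ => M)
      (integrableOn_const measure_Ioc_lt_top.ne)
      ((kernel_aesm x hf _).norm.integral_prod_right')
    filter_upwards [ae_restrict_mem measurableSet_Ioc] with t htm
    have ht0 : (0:ℝ) < t := htm.1
    have hsec := kernel_section_integrable x hf hsupp (t := t) ht0
    have hKi := gaussian_integrable ht0 x
    have hle : ∀ y : E2, ‖Real.exp (-‖x - y‖ ^ 2 / (4 * t)) / (4 * Real.pi * t) * f y‖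
        ≤ Real.exp (-‖x - y‖ ^ 2 / (4 * t)) / (4 * Real.pi * t) * M := by
      intro y
      rw [norm_mul, Real.norm_eq_abs (Real.exp _ / _),
        abs_of_nonneg (kernel_nonneg x t y ht0.le)]
      exact mul_le_mul_of_nonneg_left (hM y) (kernel_nonneg x t y ht0.le)
    have h1 : (∫ y, ‖Real.exp (-‖x - y‖ ^ 2 / (4 * t)) / (4 * Real.pi * t) * f y‖)
        ≤ ∫ y, Real.exp (-‖x - y‖ ^ 2 / (4 * t)) / (4 * Real.pi * t) * M :=
      integral_mono hsec.norm (hKi.mul_const M) hle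
    rw [integral_mul_const, gaussian_integral_eq_one ht0 x, one_mul] at h1
    rw [Real.norm_eq_abs, abs_of_nonneg (integral_nonneg (fun y => norm_nonneg _))]
    exact h1

lemma kernel_prod_integrable_ball (x : E2) (R : ℝ) :
    Integrable (fun p : ℝ × E2 =>
        Real.exp (-‖x - p.2‖ ^ 2 / (4 * p.1)) / (4 * Real.pi * p.1))
      ((volume.restrict (Set.Ioc (0:ℝ) 1)).prod (volume.restrict (Metric.closedBall x R))) := by
  rw [integrable_prod_iff (kernel_meas x).aestronglyMeasurable]
  constructor
  · filter_upwards [ae_restrict_mem measurableSet_Ioc] with t htm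
    exact ((kernel_cont x htm.1).continuousOn).integrableOn_compact
      (isCompact_closedBall x R)
  · apply Integrable.mono' (g := fun _ => (1:ℝ))
      (integrableOn_const measure_Ioc_lt_top.ne)
      ((kernel_meas x).aestronglyMeasurable.norm.integral_prod_right')
    filter_upwards [ae_restrict_mem measurableSet_Ioc] with t htm
    have ht0 : (0:ℝ) < t := htm.1
    have hKi := gaussian_integrable ht0 x
    have h1 : (∫ y in Metric.closedBall x R,
          ‖Real.exp (-‖x - y‖ ^ 2 / (4 * t)) / (4 * Real.pi * t)‖)
        = ∫ y in Metric.closedBall x R,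
          Real.exp (-‖x - y‖ ^ 2 / (4 * t)) / (4 * Real.pi * t) := by
      apply setIntegral_congr_fun measurableSet_closedBall
      intro y _
      exact Real.norm_of_nonneg (kernel_nonneg x t y ht0.le)
    have h2 : (∫ y in Metric.closedBall x R,
          Real.exp (-‖x - y‖ ^ 2 / (4 * t)) / (4 * Real.pi * t))
        ≤ ∫ y, Real.exp (-‖x - y‖ ^ 2 / (4 * t)) / (4 * Real.pi * t) :=
      setIntegral_le_integral hKi
        (Filter.Eventually.of_forall fun y => kernel_nonneg x t y ht0.le)
    rw [Real.norm_eq_abs, abs_of_nonneg (integral_nonneg fun y => norm_nonneg _), h1]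
    calc (∫ y in Metric.closedBall x R,
          Real.exp (-‖x - y‖ ^ 2 / (4 * t)) / (4 * Real.pi * t))
        ≤ ∫ y, Real.exp (-‖x - y‖ ^ 2 / (4 * t)) / (4 * Real.pi * t) := h2
      _ = 1 := gaussian_integral_eq_one ht0 x

lemma ae_ne_point (x : E2) : ∀ᵐ (y : E2), y ≠ x := by
  have h : {y : E2 | ¬ y ≠ x} = {x} := by ext y; simp
  rw [ae_iff, h]
  exact measure_singleton x

lemma log_locallyIntegrable (x : E2) :
    LocallyIntegrable (fun y : E2 => Real.log ‖x - y‖) volume := by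
  rw [locallyIntegrable_iff]
  intro k hk
  obtain ⟨R, hR⟩ := (Metric.isBounded_iff_subset_closedBall x).1 hk.isBounded
  apply IntegrableOn.mono_set _ hR
  have hI1 : IntegrableOn (fun y : E2 => ∫ t in Set.Ioc (0:ℝ) 1,
      Real.exp (-‖x - y‖ ^ 2 / (4 * t)) / (4 * Real.pi * t)) (Metric.closedBall x R) :=
    (kernel_prod_integrable_ball x R).integral_prod_right
  have hH : IntegrableOn (fun y : E2 => H (‖x - y‖ ^ 2 / (4 * 1))) (Metric.closedBall x R) :=
    ((H_continuous.comp
      (((continuous_const.sub continuous_id).norm.pow 2).div_const (4 * 1))).continuousOn).integrableOn_compact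
      (isCompact_closedBall x R)
  have hF : IntegrableOn (fun y : E2 =>
      (-(2 * Real.pi)) * (∫ t in Set.Ioc (0:ℝ) 1,
        Real.exp (-‖x - y‖ ^ 2 / (4 * t)) / (4 * Real.pi * t))
      + (2 * Real.pi) * ((1 / (4 * Real.pi)) * (Efun 1 - H 1 + Real.log (4 * 1)))
      + (1 / 2) * H (‖x - y‖ ^ 2 / (4 * 1))) (Metric.closedBall x R) :=
    ((hI1.const_mul _).add (integrableOn_const measure_closedBall_lt_top.ne)).add
      (hH.const_mul _)
  apply Integrable.congr hF
  apply ae_restrict_of_ae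
  filter_upwards [ae_ne_point x] with y hy
  have hr : 0 < ‖x - y‖ := norm_pos_iff.mpr (sub_ne_zero_of_ne hy.symm)
  rw [heat_time_integral hr one_pos]
  have hπ : Real.pi ≠ 0 := Real.pi_ne_zero
  field_simp
  ring

end


end VHPaux

open VHPaux

/-- For a continuous, compactly supported, mean-zero source `f` on ℝ², the harmonic
volume potential `∫ G(x-y) f(y) dy` with `G(x) = -(1/(2π)) log ‖x‖` is the
steady-state (infinite-time) limit of the volume heat potential. -/
theorem volume_heat_potential_tendsto_volume_potential
    (f : EuclideanSpace ℝ (Fin 2) → ℝ) (hf : Continuous f) (hsupp : HasCompactSupport f)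
    (hmean : (∫ y, f y) = 0) (x : EuclideanSpace ℝ (Fin 2)) :
    Filter.Tendsto
      (fun T : ℝ => ∫ t in (0:ℝ)..T, ∫ y,
        Real.exp (-‖x - y‖ ^ 2 / (4 * t)) / (4 * Real.pi * t) * f y)
      Filter.atTop
      (nhds (∫ y, (-(1 / (2 * Real.pi)) * Real.log ‖x - y‖) * f y)) := by
  obtain ⟨M, hM⟩ := hsupp.exists_bound_of_continuous hf
  obtain ⟨R₀, hR₀⟩ := (Metric.isBounded_iff_subset_closedBall x).1 hsupp.isBounded
  set R := max R₀ 0 with hRdef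
  have hR : tsupport f ⊆ Metric.closedBall x R :=
    hR₀.trans (Metric.closedBall_subset_closedBall (le_max_left _ _))
  have hR0 : (0:ℝ) ≤ R := le_max_right _ _
  have hfi : Integrable f := hf.integrable_of_hasCompactSupport hsupp
  have hGint : Integrable (fun y => (-(1 / (2 * Real.pi)) * Real.log ‖x - y‖) * f y) := by
    have hli := (log_locallyIntegrable x).smul (-(1 / (2 * Real.pi)))
    have := hli.integrable_smul_right_of_hasCompactSupport hf hsupp
    simpa [smul_eq_mul, Pi.smul_apply] using this
  set L := ∫ y, (-(1 / (2 * Real.pi)) * Real.log ‖x - y‖) * f y with hLdef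
  set D := R ^ 2 / (16 * Real.pi) * ∫ y, ‖f y‖ with hDdef
  have key : ∀ T : ℝ, 0 < T →
      ‖(∫ t in (0:ℝ)..T, ∫ y,
          Real.exp (-‖x - y‖ ^ 2 / (4 * t)) / (4 * Real.pi * t) * f y) - L‖ ≤ D / T := by
    intro T hT
    have hprod := kernel_prod_integrable x hf hsupp hT hM
    have hswap : (∫ t in Set.Ioc (0:ℝ) T, ∫ y,
          Real.exp (-‖x - y‖ ^ 2 / (4 * t)) / (4 * Real.pi * t) * f y)
        = ∫ y, ∫ t in Set.Ioc (0:ℝ) T,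
            Real.exp (-‖x - y‖ ^ 2 / (4 * t)) / (4 * Real.pi * t) * f y :=
      integral_integral_swap hprod
    have hAint : Integrable (fun y : E2 => (∫ t in Set.Ioc (0:ℝ) T,
        Real.exp (-‖x - y‖ ^ 2 / (4 * t)) / (4 * Real.pi * t)) * f y) := by
      have := hprod.integral_prod_right
      simpa only [integral_mul_const] using this
    have hcf : Integrable (fun y : E2 =>
        ((1 / (4 * Real.pi)) * (Efun 1 - H 1 + Real.log (4 * T))) * f y) :=
      hfi.const_mul _
    set B : E2 → ℝ := fun y => (∫ t in Set.Ioc (0:ℝ) T,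
        Real.exp (-‖x - y‖ ^ 2 / (4 * t)) / (4 * Real.pi * t)) * f y
      - ((1 / (4 * Real.pi)) * (Efun 1 - H 1 + Real.log (4 * T))) * f y
      - (-(1 / (2 * Real.pi)) * Real.log ‖x - y‖) * f y with hBdef
    have hBint : Integrable B := (hAint.sub hcf).sub hGint
    have hBae : ∀ᵐ y : E2, B y
        = ((1 / (4 * Real.pi)) * H (‖x - y‖ ^ 2 / (4 * T))) * f y := by
      filter_upwards [ae_ne_point x] with y hy
      have hr : 0 < ‖x - y‖ := norm_pos_iff.mpr (sub_ne_zero_of_ne hy.symm)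
      simp only [hBdef]
      rw [heat_time_integral hr hT]
      ring
    have hsplit : (∫ y, (∫ t in Set.Ioc (0:ℝ) T,
          Real.exp (-‖x - y‖ ^ 2 / (4 * t)) / (4 * Real.pi * t)) * f y)
        = L + ∫ y, B y := by
      have h1 : (fun y : E2 => (∫ t in Set.Ioc (0:ℝ) T,
          Real.exp (-‖x - y‖ ^ 2 / (4 * t)) / (4 * Real.pi * t)) * f y)
          = fun y => ((1 / (4 * Real.pi)) * (Efun 1 - H 1 + Real.log (4 * T))) * f y
            + ((-(1 / (2 * Real.pi)) * Real.log ‖x - y‖) * f y + B y) := by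
        funext y; simp only [hBdef]; ring
      have hGB : Integrable (fun y : E2 =>
          (-(1 / (2 * Real.pi)) * Real.log ‖x - y‖) * f y + B y) := hGint.add hBint
      rw [h1, integral_add hcf hGB, integral_add hGint hBint,
        integral_const_mul, hmean, mul_zero, zero_add, hLdef]
    have hBbound : ‖∫ y, B y‖ ≤ D / T := by
      have hbd : ∀ᵐ y : E2, ‖B y‖ ≤ (R ^ 2 / (16 * Real.pi) / T) * ‖f y‖ := by
        filter_upwards [hBae] with y hBy
        rw [hBy]
        by_cases hmem : y ∈ tsupport f
        · have hr2 : ‖x - y‖ ≤ R := by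
            have hmem2 := hR hmem
            rw [Metric.mem_closedBall] at hmem2
            calc ‖x - y‖ = dist x y := (dist_eq_norm x y).symm
              _ = dist y x := dist_comm x y
              _ ≤ R := hmem2
          have hHnn : 0 ≤ H (‖x - y‖ ^ 2 / (4 * T)) := H_nonneg (by positivity)
          have hHle : H (‖x - y‖ ^ 2 / (4 * T)) ≤ R ^ 2 / (4 * T) := by
            refine le_trans (H_le (by positivity)) ?_
            exact (div_le_div_iff_of_pos_right (by positivity)).2
              (pow_le_pow_left₀ (norm_nonneg _) hr2 2)
          rw [norm_mul]
          calc ‖(1 / (4 * Real.pi)) * H (‖x - y‖ ^ 2 / (4 * T))‖ * ‖f y‖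
              ≤ ((1 / (4 * Real.pi)) * (R ^ 2 / (4 * T))) * ‖f y‖ := by
                apply mul_le_mul_of_nonneg_right _ (norm_nonneg _)
                rw [Real.norm_eq_abs, abs_of_nonneg (by positivity)]
                exact mul_le_mul_of_nonneg_left hHle (by positivity)
            _ = (R ^ 2 / (16 * Real.pi) / T) * ‖f y‖ := by ring
        · rw [image_eq_zero_of_notMem_tsupport hmem]
          simp
      calc ‖∫ y, B y‖ ≤ ∫ y, (R ^ 2 / (16 * Real.pi) / T) * ‖f y‖ :=
            norm_integral_le_of_norm_le (hfi.norm.const_mul _) hbd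
        _ = D / T := by rw [integral_const_mul, hDdef]; ring
    calc ‖(∫ t in (0:ℝ)..T, ∫ y,
            Real.exp (-‖x - y‖ ^ 2 / (4 * t)) / (4 * Real.pi * t) * f y) - L‖
        = ‖∫ y, B y‖ := by
          rw [intervalIntegral.integral_of_le hT.le, hswap]
          simp only [integral_mul_const]
          rw [hsplit]
          congr 1
          ring
      _ ≤ D / T := hBbound
  have hDto : Filter.Tendsto (fun T : ℝ => D / T) Filter.atTop (nhds 0) :=
    Filter.Tendsto.div_atTop tendsto_const_nhds Filter.tendsto_id
  have h0 : Filter.Tendsto (fun T : ℝ =>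
      (∫ t in (0:ℝ)..T, ∫ y,
        Real.exp (-‖x - y‖ ^ 2 / (4 * t)) / (4 * Real.pi * t) * f y) - L)
      Filter.atTop (nhds 0) := by
    apply squeeze_zero_norm' _ hDto
    filter_upwards [Filter.eventually_gt_atTop 0] with T hT using key T hT
  have hfin := h0.add_const L
  simpa using hfin
end

section
/- Let 0 < δ₁ < δ₂ and define g : ℝ² → ℝ by g(k) = (exp(-‖k‖²δ₁) - exp(-‖k‖²δ₂))/‖k‖² for k ≠ 0 and g(0) = δ₂ - δ₁. Then g is infinitely differentiable (C^∞) on all of ℝ²; in particular the near-history Fourier multiplier extends smoothly across the origin. -/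
/- The near-history Fourier multiplier
`k ↦ (e^{-‖k‖²δ₁} - e^{-‖k‖²δ₂})/‖k‖²` (with value `δ₂ - δ₁` at `k = 0`)
is `C^∞` on all of ℝ². -/
open Classical in
theorem near_history_multiplier_smooth (δ₁ δ₂ : ℝ) (hδ₁ : 0 < δ₁) (hδ₁₂ : δ₁ < δ₂) :
    ContDiff ℝ (⊤ : ℕ∞) (fun k : EuclideanSpace ℝ (Fin 2) =>
      if k = 0 then δ₂ - δ₁
      else (Real.exp (-‖k‖ ^ 2 * δ₁) - Real.exp (-‖k‖ ^ 2 * δ₂)) / ‖k‖ ^ 2) := by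
  set f : ℝ → ℝ := fun t => Real.exp (-t * δ₁) - Real.exp (-t * δ₂) with hf
  -- f is smooth
  have hf_smooth : ContDiff ℝ (⊤ : ℕ∞) f := by
    apply ContDiff.sub
    · exact Real.contDiff_exp.comp (contDiff_id.neg.mul contDiff_const)
    · exact Real.contDiff_exp.comp (contDiff_id.neg.mul contDiff_const)
  -- derivative of f at 0
  have hd1 : ∀ δ : ℝ, HasDerivAt (fun t : ℝ => Real.exp (-t * δ)) (-δ) 0 := by
    intro δ
    have h1 : HasDerivAt (fun t : ℝ => -t * δ) (-δ) 0 := by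
      simpa using ((hasDerivAt_id (0 : ℝ)).neg.mul_const δ)
    simpa [Function.comp_def] using (Real.hasDerivAt_exp ((-(0:ℝ)) * δ)).comp 0 h1
  have hderiv : HasDerivAt f (δ₂ - δ₁) 0 := by
    have := (hd1 δ₁).sub (hd1 δ₂)
    have e : δ₂ - δ₁ = -δ₁ - -δ₂ := by ring
    rw [e]; exact this
  have hderiv0 : deriv f 0 = δ₂ - δ₁ := hderiv.deriv
  -- f is analytic at 0
  have hf_an : AnalyticAt ℝ f 0 := by
    apply AnalyticAt.sub
    · exact analyticAt_rexp.comp ((analyticAt_id.neg.mul analyticAt_const))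
    · exact analyticAt_rexp.comp ((analyticAt_id.neg.mul analyticAt_const))
  -- dslope f 0 is smooth everywhere
  have hds : ContDiff ℝ (⊤ : ℕ∞) (dslope f 0) := by
    rw [contDiff_iff_contDiffAt]
    intro t
    rcases eq_or_ne t 0 with rfl | ht
    · obtain ⟨p, hp⟩ := hf_an
      exact (hp.has_fpower_series_dslope_fslope.analyticAt).contDiffAt
    · have hev : (fun s : ℝ => f s / s) =ᶠ[nhds t] dslope f 0 := by
        filter_upwards [isOpen_ne.mem_nhds ht] with s hs
        rw [dslope_of_ne _ hs, slope_def_field]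
        have hf0 : f 0 = 0 := by simp [hf]
        rw [hf0]
        simp [div_eq_mul_inv]
      exact ContDiffAt.congr_of_eventuallyEq
        ((hf_smooth.contDiffAt).div contDiffAt_id ht) hev.symm
  -- norm squared is smooth
  have hns : ContDiff ℝ (⊤ : ℕ∞) (fun k : EuclideanSpace ℝ (Fin 2) => ‖k‖ ^ 2) :=
    contDiff_norm_sq ℝ
  have hcomp := hds.comp hns
  have heq : (dslope f 0 ∘ fun k : EuclideanSpace ℝ (Fin 2) => ‖k‖ ^ 2) =
      (fun k : EuclideanSpace ℝ (Fin 2) =>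
      if k = 0 then δ₂ - δ₁
      else (Real.exp (-‖k‖ ^ 2 * δ₁) - Real.exp (-‖k‖ ^ 2 * δ₂)) / ‖k‖ ^ 2) := by
    funext k
    rcases eq_or_ne k 0 with rfl | hk
    · simp [dslope_same, hderiv0]
    · have hk2 : (‖k‖ : ℝ) ^ 2 ≠ 0 :=
        pow_ne_zero 2 (norm_ne_zero_iff.mpr hk)
      simp only [Function.comp, if_neg hk]
      rw [dslope_of_ne _ hk2, slope_def_field]
      have hf0 : f 0 = 0 := by simp [hf]
      rw [hf0]
      simp [hf, div_eq_mul_inv]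
  rw [← heq]; exact hcomp
end

section
/- Let γ : ℝ → ℝ² be a continuously differentiable 2π-periodic curve and σ : ℝ → ℝ a continuous 2π-periodic density, and let 0 < δ₁ < δ₂. Then for every x ∈ ℝ², the near-history single layer heat potential satisfies ∫_{δ₁}^{δ₂} ∫_0^{2π} exp(-‖x-γ(θ)‖²/(4t))/(4πt) · σ(θ)·‖γ'(θ)‖ dθ dt = (2π)^{-2} ∫_{ℝ²} ((exp(-‖k‖²δ₁) - exp(-‖k‖²δ₂))/‖k‖²) · exp(i k·x) · σ̂(k) dk, where σ̂(k) = ∫_0^{2π} exp(-i k·γ(θ)) σ(θ) ‖γ'(θ)‖ dθ. -/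
/-! In the plane the heat kernel is the inverse Fourier transform of a Gaussian,
`K(y, t) = (2π)⁻² ∫ e^{-t‖k‖²} e^{i⟪y, k⟫} dk`. Inserting this into the potential gives a triple
integral over `(k, θ, t)` which converges absolutely because `t ≥ δ₁ > 0`: the integrand is
dominated by `e^{-δ₁‖k‖²} sup |σ| ‖γ'‖`. By Fubini the time integral may then be done first; for
`k ≠ 0` it equals `(e^{-‖k‖²δ₁} - e^{-‖k‖²δ₂}) / ‖k‖²`, and the `θ`-integral factors as
`e^{i⟪k, x⟫} σ̂(k)`. -/

open MeasureTheory

open scoped Real InnerProductSpace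

theorem integral_integral_integral_comm {α β γ E : Type*} [MeasurableSpace α] [MeasurableSpace β]
    [MeasurableSpace γ] [NormedAddCommGroup E] [NormedSpace ℝ E] {μ : Measure α} {ν : Measure β}
    {ρ : Measure γ} [SFinite μ] [SFinite ν] [SFinite ρ] {f : α → β → γ → E}
    (hf : Integrable (fun p : α × β × γ => f p.1 p.2.1 p.2.2) (μ.prod (ν.prod ρ))) :
    ∫ x, ∫ y, ∫ z, f x y z ∂ρ ∂ν ∂μ = ∫ z, ∫ y, ∫ x, f x y z ∂μ ∂ν ∂ρ := by
  have hf' : Integrable (fun q : β × γ => ∫ x, f x q.1 q.2 ∂μ) (ν.prod ρ) :=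
    hf.swap.integral_prod_left
  calc ∫ x, ∫ y, ∫ z, f x y z ∂ρ ∂ν ∂μ
      = ∫ x, ∫ q, f x q.1 q.2 ∂(ν.prod ρ) ∂μ := by
        refine integral_congr_ae ?_
        filter_upwards [hf.prod_right_ae] with x hx
        rw [integral_prod _ hx]
    _ = ∫ q, ∫ x, f x q.1 q.2 ∂μ ∂(ν.prod ρ) := integral_integral_swap hf
    _ = ∫ y, ∫ z, ∫ x, f x y z ∂μ ∂ρ ∂ν := integral_prod _ hf'
    _ = ∫ z, ∫ y, ∫ x, f x y z ∂μ ∂ν ∂ρ := integral_integral_swap hf'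

theorem integral_exp_neg_mul {c : ℝ} (hc : c ≠ 0) (a b : ℝ) :
    ∫ t in a..b, Real.exp (-t * c) = (Real.exp (-c * a) - Real.exp (-c * b)) / c := by
  have := intervalIntegral.integral_comp_mul_left (a := a) (b := b) Real.exp (neg_ne_zero.2 hc)
  simp only [integral_exp, neg_mul] at this
  simp only [neg_mul, mul_neg, mul_comm _ c, this, smul_eq_mul]
  field_simp
  ring

section Fourier

variable {V : Type*} [NormedAddCommGroup V] [InnerProductSpace ℝ V]

/-- The integrand of the potential after inserting the Fourier representation of the heat kernel;
in the application `y θ = x - γ θ` and `a θ = σ θ ‖γ' θ‖`. -/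
noncomputable def heatFourierIntegrand (y : ℝ → V) (a : ℝ → ℂ) (k : V) (θ t : ℝ) : ℂ :=
  (Real.exp (-t * ‖k‖ ^ 2) : ℂ) * (Complex.exp (Complex.I * ⟪y θ, k⟫_ℝ) * a θ)

theorem norm_heatFourierIntegrand (y : ℝ → V) (a : ℝ → ℂ) (k : V) (θ t : ℝ) :
    ‖heatFourierIntegrand y a k θ t‖ = Real.exp (-t * ‖k‖ ^ 2) * ‖a θ‖ := by
  simp [heatFourierIntegrand, Complex.norm_exp, -Complex.ofReal_exp]

theorem setIntegral_heatFourierIntegrand_time {k : V} (hk : k ≠ 0) (y : ℝ → V) (a : ℝ → ℂ)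
    (θ : ℝ) {δ₁ δ₂ : ℝ} (hδ : δ₁ ≤ δ₂) :
    ∫ t in Set.Ioc δ₁ δ₂, heatFourierIntegrand y a k θ t =
      (((Real.exp (-‖k‖ ^ 2 * δ₁) - Real.exp (-‖k‖ ^ 2 * δ₂)) / ‖k‖ ^ 2 : ℝ) : ℂ) *
        (Complex.exp (Complex.I * ⟪y θ, k⟫_ℝ) * a θ) := by
  rw [← intervalIntegral.integral_of_le hδ]
  simp only [heatFourierIntegrand, intervalIntegral.integral_mul_const,
    intervalIntegral.integral_ofReal, integral_exp_neg_mul (pow_ne_zero 2 (norm_ne_zero_iff.2 hk))]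

theorem fourier_integrand_eq_integral_heatFourierIntegrand (x : V) (γ : ℝ → V) (a : ℝ → ℂ)
    {k : V} (hk : k ≠ 0) {α β δ₁ δ₂ : ℝ} (hαβ : α ≤ β) (hδ : δ₁ ≤ δ₂) :
    (((Real.exp (-‖k‖ ^ 2 * δ₁) - Real.exp (-‖k‖ ^ 2 * δ₂)) / ‖k‖ ^ 2 : ℝ) : ℂ) *
        Complex.exp (Complex.I * ⟪k, x⟫_ℝ) *
        ∫ θ in α..β, Complex.exp (-(Complex.I * ⟪k, γ θ⟫_ℝ)) * a θ =
      ∫ θ in Set.Ioc α β, ∫ t in Set.Ioc δ₁ δ₂,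
        heatFourierIntegrand (fun θ => x - γ θ) a k θ t := by
  rw [intervalIntegral.integral_of_le hαβ, ← integral_const_mul]
  refine integral_congr_ae (.of_forall fun θ => ?_)
  have hphase : Complex.exp (Complex.I * ⟪x - γ θ, k⟫_ℝ) =
      Complex.exp (Complex.I * ⟪k, x⟫_ℝ) * Complex.exp (-(Complex.I * ⟪k, γ θ⟫_ℝ)) := by
    rw [← Complex.exp_add, inner_sub_left, real_inner_comm x, real_inner_comm (γ θ)]
    push_cast
    ring_nf
  simp only [setIntegral_heatFourierIntegrand_time hk _ a θ hδ, hphase]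
  ring

variable [FiniteDimensional ℝ V] [MeasurableSpace V] [BorelSpace V]

theorem heatKernel_eq_integral_fourier (hV : Module.finrank ℝ V = 2) {t : ℝ} (ht : 0 < t) (y : V) :
    ((Real.exp (-‖y‖ ^ 2 / (4 * t)) / (4 * π * t) : ℝ) : ℂ) =
      ((1 / (2 * π) ^ 2 : ℝ) : ℂ) *
        ∫ k : V, (Real.exp (-t * ‖k‖ ^ 2) : ℂ) * Complex.exp (Complex.I * ⟪y, k⟫_ℝ) := by
  have hgauss := GaussianFourier.integral_cexp_neg_mul_sq_norm_add (V := V) (b := (t : ℂ))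
    (by simpa using ht) Complex.I y
  norm_num [hV] at hgauss
  simp only [Complex.ofReal_exp, ← Complex.exp_add]
  push_cast
  simp only [neg_mul] at hgauss ⊢
  rw [hgauss]
  have hπ : (π : ℂ) ≠ 0 := by exact_mod_cast Real.pi_ne_zero
  have ht' : (t : ℂ) ≠ 0 := by exact_mod_cast ht.ne'
  field_simp
  ring_nf

theorem integrable_heatFourierIntegrand {y : ℝ → V} {a : ℝ → ℂ} (hy : Continuous y)
    (ha : Continuous a) (α β : ℝ) {δ₁ : ℝ} (hδ₁ : 0 < δ₁) (δ₂ : ℝ) :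
    Integrable (fun p : V × ℝ × ℝ => heatFourierIntegrand y a p.1 p.2.1 p.2.2)
      ((volume : Measure V).prod
        ((volume.restrict (Set.Ioc α β)).prod (volume.restrict (Set.Ioc δ₁ δ₂)))) := by
  obtain ⟨C, hC⟩ := (isCompact_Icc (a := α) (b := β)).exists_bound_of_continuousOn ha.continuousOn
  have hgauss : Integrable (fun k : V => Real.exp (-δ₁ * ‖k‖ ^ 2)) := by
    refine (GaussianFourier.integrable_cexp_neg_mul_sq_norm_add (V := V) (b := (δ₁ : ℂ))
      (by simpa using hδ₁) 0 0).norm.congr (.of_forall fun k => ?_)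
    simp [Complex.norm_exp, ← Complex.ofReal_pow]
  have hbound : Integrable (fun p : V × ℝ × ℝ => Real.exp (-δ₁ * ‖p.1‖ ^ 2) * C)
      ((volume : Measure V).prod
        ((volume.restrict (Set.Ioc α β)).prod (volume.restrict (Set.Ioc δ₁ δ₂)))) :=
    hgauss.mul_prod (integrable_const C)
  refine hbound.mono' (by unfold heatFourierIntegrand; fun_prop) ?_
  rw [Measure.prod_restrict, ← Measure.restrict_univ (μ := volume), Measure.prod_restrict]
  filter_upwards
    [ae_restrict_mem (MeasurableSet.univ.prod (measurableSet_Ioc.prod measurableSet_Ioc))]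
    with ⟨k, θ, t⟩ ⟨_, hθ, ht⟩
  rw [norm_heatFourierIntegrand]
  gcongr
  · nlinarith [ht.1, sq_nonneg ‖k‖]
  · exact hC θ (Set.Ioc_subset_Icc_self hθ)


theorem ofReal_integral_heatKernel_eq (hV : Module.finrank ℝ V = 2) (y : ℝ → V) (a : ℝ → ℝ)
    {α β δ₁ δ₂ : ℝ} (hαβ : α ≤ β) (hδ₁ : 0 < δ₁) (hδ : δ₁ ≤ δ₂) :
    ((∫ t in δ₁..δ₂, ∫ θ in α..β, Real.exp (-‖y θ‖ ^ 2 / (4 * t)) / (4 * π * t) * a θ : ℝ) : ℂ) =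
      ((1 / (2 * π) ^ 2 : ℝ) : ℂ) * ∫ t in Set.Ioc δ₁ δ₂, ∫ θ in Set.Ioc α β, ∫ k,
        heatFourierIntegrand y (fun θ => (a θ : ℂ)) k θ t := by
  rw [← intervalIntegral.integral_ofReal, intervalIntegral.integral_of_le hδ, ← integral_const_mul]
  refine setIntegral_congr_fun measurableSet_Ioc fun t ht => ?_
  rw [← intervalIntegral.integral_ofReal, intervalIntegral.integral_of_le hαβ,
    ← integral_const_mul]
  refine integral_congr_ae (.of_forall fun θ => ?_)
  simp only [heatFourierIntegrand, ← mul_assoc, integral_mul_const]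
  rw [Complex.ofReal_mul, heatKernel_eq_integral_fourier hV (hδ₁.trans ht.1)]

end Fourier

theorem near_history_single_layer_fourier_rep_general
    (γ : ℝ → EuclideanSpace ℝ (Fin 2)) (hγ : ContDiff ℝ 1 γ)
    (σ : ℝ → ℝ) (hσ : Continuous σ)
    (δ₁ δ₂ : ℝ) (hδ₁ : 0 < δ₁) (hδ₁₂ : δ₁ < δ₂) (x : EuclideanSpace ℝ (Fin 2)) :
    ((∫ t in δ₁..δ₂, ∫ θ in (0:ℝ)..(2 * Real.pi),
        Real.exp (-‖x - γ θ‖ ^ 2 / (4 * t)) / (4 * Real.pi * t) * (σ θ * ‖deriv γ θ‖) : ℝ) : ℂ)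
      = ((1 / (2 * Real.pi) ^ 2 : ℝ) : ℂ) *
        ∫ k : EuclideanSpace ℝ (Fin 2),
          (((Real.exp (-‖k‖ ^ 2 * δ₁) - Real.exp (-‖k‖ ^ 2 * δ₂)) / ‖k‖ ^ 2 : ℝ) : ℂ) *
          Complex.exp (Complex.I * ((inner ℝ k x : ℝ) : ℂ)) *
          ∫ θ in (0:ℝ)..(2 * Real.pi),
            Complex.exp (-(Complex.I * ((inner ℝ k (γ θ) : ℝ) : ℂ))) *
            ((σ θ * ‖deriv γ θ‖ : ℝ) : ℂ) := by
  have h2π : (0 : ℝ) ≤ 2 * π := by positivity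
  have hdensity : Continuous fun θ => ((σ θ * ‖deriv γ θ‖ : ℝ) : ℂ) := by
    have := hγ.continuous_deriv le_rfl
    fun_prop
  have hint := integrable_heatFourierIntegrand (y := fun θ => x - γ θ)
    (continuous_const.sub hγ.continuous) hdensity 0 (2 * π) hδ₁ δ₂
  rw [ofReal_integral_heatKernel_eq finrank_euclideanSpace_fin (fun θ => x - γ θ) _ h2π hδ₁
    hδ₁₂.le, ← integral_integral_integral_comm hint]
  congr 1
  refine integral_congr_ae ?_
  filter_upwards [measure_eq_zero_iff_ae_notMem.1 (measure_singleton 0)] with k hk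
  exact (fourier_integrand_eq_integral_heatFourierIntegrand x γ _ hk h2π hδ₁₂.le).symm

/-- Fourier representation of the near-history single layer heat potential for a
closed C¹ curve `γ` (2π-periodic) with continuous 2π-periodic density `σ`. -/
theorem near_history_single_layer_fourier_rep
    (γ : ℝ → EuclideanSpace ℝ (Fin 2)) (hγ : ContDiff ℝ 1 γ)
    (hγper : Function.Periodic γ (2 * Real.pi))
    (σ : ℝ → ℝ) (hσ : Continuous σ) (hσper : Function.Periodic σ (2 * Real.pi))
    (δ₁ δ₂ : ℝ) (hδ₁ : 0 < δ₁) (hδ₁₂ : δ₁ < δ₂) (x : EuclideanSpace ℝ (Fin 2)) :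
    ((∫ t in δ₁..δ₂, ∫ θ in (0:ℝ)..(2 * Real.pi),
        Real.exp (-‖x - γ θ‖ ^ 2 / (4 * t)) / (4 * Real.pi * t) * (σ θ * ‖deriv γ θ‖) : ℝ) : ℂ)
      = ((1 / (2 * Real.pi) ^ 2 : ℝ) : ℂ) *
        ∫ k : EuclideanSpace ℝ (Fin 2),
          (((Real.exp (-‖k‖ ^ 2 * δ₁) - Real.exp (-‖k‖ ^ 2 * δ₂)) / ‖k‖ ^ 2 : ℝ) : ℂ) *
          Complex.exp (Complex.I * ((inner ℝ k x : ℝ) : ℂ)) *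
          ∫ θ in (0:ℝ)..(2 * Real.pi),
            Complex.exp (-(Complex.I * ((inner ℝ k (γ θ) : ℝ) : ℂ))) *
            ((σ θ * ‖deriv γ θ‖ : ℝ) : ℂ) :=
  near_history_single_layer_fourier_rep_general γ hγ σ hσ δ₁ δ₂ hδ₁ hδ₁₂ x
end

section
/- Let γ = (γ₁,γ₂) : ℝ → ℝ² be a continuously differentiable 2π-periodic curve, μ : ℝ → ℝ a continuous 2π-periodic density, n(θ) = (γ₂'(θ), -γ₁'(θ)) the (unnormalized) normal, and let 0 < δ₁ < δ₂. Then for every x ∈ ℝ², the near-history double layer heat potential satisfies ∫_{δ₁}^{δ₂} ∫_0^{2π} ((x-γ(θ))·n(θ)/(2t)) · exp(-‖x-γ(θ)‖²/(4t))/(4πt) · μ(θ) dθ dt = (2π)^{-2} ∫_{ℝ²} ((exp(-‖k‖²δ₁) - exp(-‖k‖²δ₂))/‖k‖²) · exp(i k·x) · (-i)·(k₁ m̂₁(k) + k₂ m̂₂(k)) dk, where m̂_j(k) = ∫_0^{2π} exp(-i k·γ(θ)) μ(θ) n_j(θ) dθ for j = 1,2. -/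
open MeasureTheory

/-- The point `(a, b)` of the Euclidean plane. -/
noncomputable def planePt (a b : ℝ) : EuclideanSpace ℝ (Fin 2) :=
  (WithLp.equiv 2 (Fin 2 → ℝ)).symm ![a, b]

/-!
The normal derivative of the heat kernel has the Fourier representation
`∂ₙ K(w, t) = (2π)⁻² ∫ (-i) (n · k) e^{-t‖k‖²} e^{i k · w} dk`, obtained by differentiating the
Gaussian integral `∫ e^{-t‖k‖² + i k · w} dk = (π / t) e^{-‖w‖² / 4t}` in `w`. For `t ≥ δ₁ > 0`
the integrand is bounded by `C ‖k‖ e^{-δ₁‖k‖²}`, so Fubini moves the `k`-integral outside the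
integrals over `t ∈ [δ₁, δ₂]` and `θ ∈ [0, 2π]`; these then factor, the time integral of
`e^{-t‖k‖²}` giving `(e^{-‖k‖²δ₁} - e^{-‖k‖²δ₂}) / ‖k‖²` and the curve integral giving
`k₁ m̂₁(k) + k₂ m̂₂(k)`.
-/

open Complex Set
open scoped Real InnerProductSpace

theorem mul_exp_neg_mul_sq_le {a : ℝ} (ha : 0 < a) (s : ℝ) :
    s * Real.exp (-a * s ^ 2) ≤ Real.exp (-(a / 2) * s ^ 2) / √a := by
  have hsa : √a * s ≤ Real.exp (a / 2 * s ^ 2) := by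
    have : a / 2 * s ^ 2 = (√a * s) ^ 2 / 2 := by
      rw [mul_pow, Real.sq_sqrt ha.le]; ring
    rw [this]
    nlinarith [Real.add_one_le_exp ((√a * s) ^ 2 / 2), sq_nonneg (√a * s - 1)]
  rw [le_div_iff₀ (Real.sqrt_pos.mpr ha)]
  calc s * Real.exp (-a * s ^ 2) * √a = (√a * s) * Real.exp (-a * s ^ 2) := by ring
    _ ≤ Real.exp (a / 2 * s ^ 2) * Real.exp (-a * s ^ 2) := by gcongr
    _ = Real.exp (-(a / 2) * s ^ 2) := by rw [← Real.exp_add]; ring_nf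

theorem integrable_prod_of_ae_forall_norm_le {α β E : Type*} [MeasurableSpace α]
    [MeasurableSpace β] [NormedAddCommGroup E] {μ : Measure α} {ν : Measure β} [SFinite μ]
    [IsFiniteMeasure ν] {F : α × β → E} (hF : AEStronglyMeasurable F (μ.prod ν)) {g : α → ℝ}
    (hg : Integrable g μ) (hle : ∀ᵐ y ∂ν, ∀ x, ‖F (x, y)‖ ≤ g x) :
    Integrable F (μ.prod ν) :=
  (hg.comp_fst ν).mono' hF <| (Measure.quasiMeasurePreserving_snd.ae hle).mono fun _ h => h _

theorem intervalIntegral_intervalIntegral_eq_setIntegral_prod {E : Type*} [NormedAddCommGroup E]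
    [NormedSpace ℝ E] {a₁ b₁ a₂ b₂ : ℝ} (h₁ : a₁ ≤ b₁) (h₂ : a₂ ≤ b₂) {f : ℝ × ℝ → E}
    (hf : IntegrableOn f (Icc a₁ b₁ ×ˢ Icc a₂ b₂)) :
    ∫ s in a₁..b₁, ∫ t in a₂..b₂, f (s, t) = ∫ p in Icc a₁ b₁ ×ˢ Icc a₂ b₂, f p := by
  rw [Measure.volume_eq_prod, setIntegral_prod f hf, intervalIntegral.integral_of_le h₁,
    ← integral_Icc_eq_integral_Ioc]
  refine setIntegral_congr_fun measurableSet_Icc fun s _ => ?_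
  rw [intervalIntegral.integral_of_le h₂, integral_Icc_eq_integral_Ioc]

section Gaussian

variable {V : Type*} [NormedAddCommGroup V] [InnerProductSpace ℝ V] [FiniteDimensional ℝ V]
  [MeasurableSpace V] [BorelSpace V]

theorem integrable_exp_neg_mul_sq_norm {a : ℝ} (ha : 0 < a) :
    Integrable (fun v : V => Real.exp (-a * ‖v‖ ^ 2)) := by
  have h := (GaussianFourier.integrable_cexp_neg_mul_sq_norm_add (V := V)
    (b := (a : ℂ)) (by simpa using ha) 0 0).norm
  refine h.congr (ae_of_all _ fun v => ?_)
  simp [Complex.norm_exp, ← Complex.ofReal_pow]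

theorem integrable_norm_mul_exp_neg_mul_sq_norm {a : ℝ} (ha : 0 < a) :
    Integrable (fun v : V => ‖v‖ * Real.exp (-a * ‖v‖ ^ 2)) := by
  refine ((integrable_exp_neg_mul_sq_norm (half_pos ha)).div_const √a).mono' (by fun_prop)
    (ae_of_all _ fun v => ?_)
  rw [Real.norm_of_nonneg (by positivity)]
  exact mul_exp_neg_mul_sq_le ha ‖v‖

theorem integral_inner_mul_cexp_neg_mul_sq_norm_add {b : ℂ} (hb : 0 < b.re) (n w : V) :
    ∫ v : V, (⟪n, v⟫_ℝ : ℂ) * cexp (-b * ‖v‖ ^ 2 + I * ⟪w, v⟫_ℝ) =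
      (π / b) ^ (Module.finrank ℝ V / 2 : ℂ) * cexp (-‖w‖ ^ 2 / (4 * b)) *
        (I * ⟪n, w⟫_ℝ / (2 * b)) := by
  -- Differentiate the Gaussian Fourier integral at `w + s • n` with respect to `s` at `s = 0`.
  set F : ℝ → V → ℂ := fun s v => cexp (-b * ‖v‖ ^ 2 + I * ⟪w + s • n, v⟫_ℝ)
  set F' : ℝ → V → ℂ := fun s v => I * ⟪n, v⟫_ℝ * F s v
  have hF : ∀ s v, HasDerivAt (F · v) (F' s v) s := by
    intro s v
    have hexponent : HasDerivAt (fun s : ℝ => -b * ‖v‖ ^ 2 + I * ((⟪w + s • n, v⟫_ℝ : ℝ) : ℂ))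
        (I * ⟪n, v⟫_ℝ) s := by
      simp only [inner_add_left, inner_smul_left, RCLike.conj_to_real, ofReal_add, ofReal_mul]
      simpa using ((((hasDerivAt_id (s : ℂ)).comp_ofReal.mul_const ((⟪n, v⟫_ℝ : ℝ) : ℂ)).const_add
        ((⟪w, v⟫_ℝ : ℝ) : ℂ)).const_mul I).const_add (-b * ‖v‖ ^ 2)
    simpa [F, F', mul_comm] using hexponent.cexp
  have hF_norm : ∀ s v, ‖F s v‖ = Real.exp (-b.re * ‖v‖ ^ 2) := by
    intro s v
    simp [F, Complex.norm_exp, ← ofReal_pow]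
  have hF'_le : ∀ s v, ‖F' s v‖ ≤ ‖n‖ * (‖v‖ * Real.exp (-b.re * ‖v‖ ^ 2)) := by
    intro s v
    rw [norm_mul, norm_mul, norm_I, one_mul, hF_norm, norm_real, ← mul_assoc]
    gcongr
    exact norm_inner_le_norm n v
  have hF_int : Integrable (F 0) := by
    simpa [F, real_inner_comm w] using
      GaussianFourier.integrable_cexp_neg_mul_sq_norm_add hb I w
  obtain ⟨-, hderiv⟩ := hasDerivAt_integral_of_dominated_loc_of_deriv_le (x₀ := (0 : ℝ))
    Filter.univ_mem (Filter.Eventually.of_forall fun s => by fun_prop) hF_int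
    (by fun_prop) (ae_of_all _ fun v s _ => hF'_le s v)
    ((integrable_norm_mul_exp_neg_mul_sq_norm hb).const_mul ‖n‖) (ae_of_all _ fun v s _ => hF s v)
  set C := (π / b) ^ (Module.finrank ℝ V / 2 : ℂ)
  have hclosed : (fun s => ∫ v, F s v) = fun s : ℝ => C * cexp (-‖w + s • n‖ ^ 2 / (4 * b)) := by
    ext s
    rw [GaussianFourier.integral_cexp_neg_mul_sq_norm_add hb, I_sq]
    congr 2
    ring
  have hclosed' : HasDerivAt (fun s : ℝ => C * cexp (-‖w + s • n‖ ^ 2 / (4 * b)))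
      (C * cexp (-‖w‖ ^ 2 / (4 * b)) * (-(2 * ⟪w, n⟫_ℝ) / (4 * b))) 0 := by
    have hnorm : HasDerivAt (fun s : ℝ => ‖w + s • n‖ ^ 2) (2 * ⟪w, n⟫_ℝ) 0 := by
      simpa using ((hasDerivAt_id (0 : ℝ)).smul_const n).const_add w |>.norm_sq
    simpa [mul_assoc] using ((hnorm.ofReal_comp.neg.div_const (4 * b)).cexp).const_mul C
  have hmoment := hderiv.unique (hclosed ▸ hclosed')
  simp only [F', F, zero_smul, add_zero, mul_assoc, integral_const_mul] at hmoment
  rw [real_inner_comm n w] at hmoment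
  linear_combination (-I) * hmoment +
    (∫ v : V, (⟪n, v⟫_ℝ : ℂ) * cexp (-b * ‖v‖ ^ 2 + I * ⟪w, v⟫_ℝ)) * I_sq

theorem heatKernel_normalDeriv_eq_integral (hV : Module.finrank ℝ V = 2) {t : ℝ} (ht : 0 < t)
    (w n : V) :
    (((⟪w, n⟫_ℝ / (2 * t)) * (Real.exp (-‖w‖ ^ 2 / (4 * t)) / (4 * π * t)) : ℝ) : ℂ) =
      ((1 / (2 * π) ^ 2 : ℝ) : ℂ) *
        ∫ k : V, -I * ⟪n, k⟫_ℝ * cexp (-t * ‖k‖ ^ 2 + I * ⟪w, k⟫_ℝ) := by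
  simp_rw [mul_assoc (-I)]
  rw [integral_const_mul, integral_inner_mul_cexp_neg_mul_sq_norm_add (by simpa using ht), hV,
    real_inner_comm]
  have ht' : (t : ℂ) ≠ 0 := by exact_mod_cast ht.ne'
  have hπ : (π : ℂ) ≠ 0 := by exact_mod_cast Real.pi_ne_zero
  rw [show ((2 : ℕ) : ℂ) / 2 = 1 by norm_num, cpow_one]
  push_cast
  field_simp
  linear_combination (4 * (⟪n, w⟫_ℝ : ℂ)) * I_sq

end Gaussian

section DoubleLayer

variable {V : Type*} [NormedAddCommGroup V] [InnerProductSpace ℝ V]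

/-- With `p = (t, θ)`, `(2π)⁻² ∫ k, doubleLayerFourierIntegrand γ n μ x k p` is the integrand of the
double layer potential at `p` (see `heatKernel_normalDeriv_eq_integral`). -/
noncomputable def doubleLayerFourierIntegrand (γ n : ℝ → V) (μ : ℝ → ℝ) (x k : V) (p : ℝ × ℝ) :
    ℂ :=
  μ p.2 * (-I * ⟪n p.2, k⟫_ℝ * cexp (-p.1 * ‖k‖ ^ 2 + I * ⟪x - γ p.2, k⟫_ℝ))

theorem continuous_doubleLayerFourierIntegrand {γ n : ℝ → V} {μ : ℝ → ℝ} (hγ : Continuous γ)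
    (hn : Continuous n) (hμ : Continuous μ) (x : V) :
    Continuous fun q : V × ℝ × ℝ => doubleLayerFourierIntegrand γ n μ x q.1 q.2 := by
  unfold doubleLayerFourierIntegrand
  fun_prop

theorem norm_doubleLayerFourierIntegrand (γ n : ℝ → V) (μ : ℝ → ℝ) (x k : V) (p : ℝ × ℝ) :
    ‖doubleLayerFourierIntegrand γ n μ x k p‖ =
      |μ p.2| * |⟪n p.2, k⟫_ℝ| * Real.exp (-p.1 * ‖k‖ ^ 2) := by
  simp [doubleLayerFourierIntegrand, Complex.norm_exp, ← ofReal_pow, mul_assoc]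

theorem intervalIntegral_doubleLayerFourierIntegrand (γ n : ℝ → V) (μ : ℝ → ℝ) (x k : V)
    (δ₁ δ₂ a b : ℝ) :
    ∫ t in δ₁..δ₂, ∫ θ in a..b, doubleLayerFourierIntegrand γ n μ x k (t, θ) =
      (((Real.exp (-‖k‖ ^ 2 * δ₁) - Real.exp (-‖k‖ ^ 2 * δ₂)) / ‖k‖ ^ 2 : ℝ) : ℂ) *
        cexp (I * ⟪k, x⟫_ℝ) *
        (-I * ∫ θ in a..b, cexp (-(I * ⟪k, γ θ⟫_ℝ)) * ((μ θ * ⟪k, n θ⟫_ℝ : ℝ) : ℂ)) := by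
  -- At `k = 0` the time factor is `0 / 0 = 0`, and both sides vanish because `⟪k, n θ⟫ = 0`.
  rcases eq_or_ne k 0 with rfl | hk
  · simp [doubleLayerFourierIntegrand]
  have hsplit : ∀ t θ, doubleLayerFourierIntegrand γ n μ x k (t, θ) =
      cexp (-‖k‖ ^ 2 * t) * (cexp (I * ⟪k, x⟫_ℝ) *
        (-I * (cexp (-(I * ⟪k, γ θ⟫_ℝ)) * ((μ θ * ⟪k, n θ⟫_ℝ : ℝ) : ℂ)))) := by
    intro t θ
    rw [doubleLayerFourierIntegrand, real_inner_comm k, real_inner_comm k, inner_sub_right,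
      ofReal_sub, mul_sub, sub_eq_add_neg, ← add_assoc, exp_add, exp_add]
    rw [show -(t : ℂ) * ‖k‖ ^ 2 = -‖k‖ ^ 2 * t by ring]
    push_cast
    ring
  have htime : ∫ t in δ₁..δ₂, cexp (-‖k‖ ^ 2 * t) =
      (((Real.exp (-‖k‖ ^ 2 * δ₁) - Real.exp (-‖k‖ ^ 2 * δ₂)) / ‖k‖ ^ 2 : ℝ) : ℂ) := by
    have hk2 : -(‖k‖ : ℂ) ^ 2 ≠ 0 := by simpa using hk
    rw [integral_exp_mul_complex hk2]
    push_cast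
    field_simp
    ring
  simp_rw [hsplit, intervalIntegral.integral_const_mul, intervalIntegral.integral_mul_const, htime]
  ring

variable [FiniteDimensional ℝ V] [MeasurableSpace V] [BorelSpace V]

theorem integrable_doubleLayerFourierIntegrand {γ n : ℝ → V} {μ : ℝ → ℝ} (hγ : Continuous γ)
    (hn : Continuous n) (hμ : Continuous μ) {δ₁ : ℝ} (hδ₁ : 0 < δ₁) (δ₂ a b : ℝ) (x : V) :
    Integrable (fun q : V × ℝ × ℝ => doubleLayerFourierIntegrand γ n μ x q.1 q.2)
      (volume.prod (volume.restrict (Icc δ₁ δ₂ ×ˢ Icc a b))) := by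
  have : IsFiniteMeasure (volume.restrict (Icc δ₁ δ₂ ×ˢ Icc a b)) :=
    isFiniteMeasure_restrict.mpr (isCompact_Icc.prod isCompact_Icc).measure_lt_top.ne
  obtain ⟨C, hC⟩ := isCompact_Icc.exists_bound_of_continuousOn (hμ.smul hn).continuousOn
  refine integrable_prod_of_ae_forall_norm_le
    (continuous_doubleLayerFourierIntegrand hγ hn hμ x).aestronglyMeasurable
    ((integrable_norm_mul_exp_neg_mul_sq_norm hδ₁).const_mul C) ?_
  filter_upwards [ae_restrict_mem (measurableSet_Icc.prod measurableSet_Icc)]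
    with ⟨t, θ⟩ ⟨ht, hθ⟩ k
  rw [norm_doubleLayerFourierIntegrand]
  calc |μ θ| * |⟪n θ, k⟫_ℝ| * Real.exp (-t * ‖k‖ ^ 2)
      ≤ |μ θ| * (‖n θ‖ * ‖k‖) * Real.exp (-δ₁ * ‖k‖ ^ 2) := by
        gcongr
        · exact abs_real_inner_le_norm _ _
        · exact ht.1
    _ = ‖μ θ • n θ‖ * (‖k‖ * Real.exp (-δ₁ * ‖k‖ ^ 2)) := by
        rw [norm_smul, Real.norm_eq_abs]
        ring
    _ ≤ C * (‖k‖ * Real.exp (-δ₁ * ‖k‖ ^ 2)) := by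
        gcongr
        exact hC θ hθ

theorem intervalIntegral_heatDoubleLayer_eq_integral_fourier (hV : Module.finrank ℝ V = 2)
    {γ n : ℝ → V} {μ : ℝ → ℝ} (hγ : Continuous γ) (hn : Continuous n) (hμ : Continuous μ)
    {δ₁ δ₂ a b : ℝ} (hδ₁ : 0 < δ₁) (hδ₁₂ : δ₁ ≤ δ₂) (hab : a ≤ b) (x : V) :
    ((∫ t in δ₁..δ₂, ∫ θ in a..b,
        (⟪x - γ θ, n θ⟫_ℝ / (2 * t)) * (Real.exp (-‖x - γ θ‖ ^ 2 / (4 * t)) / (4 * π * t)) *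
          μ θ : ℝ) : ℂ) =
      ((1 / (2 * π) ^ 2 : ℝ) : ℂ) * ∫ k : V,
        (((Real.exp (-‖k‖ ^ 2 * δ₁) - Real.exp (-‖k‖ ^ 2 * δ₂)) / ‖k‖ ^ 2 : ℝ) : ℂ) *
          cexp (I * ⟪k, x⟫_ℝ) *
          (-I * ∫ θ in a..b, cexp (-(I * ⟪k, γ θ⟫_ℝ)) * ((μ θ * ⟪k, n θ⟫_ℝ : ℝ) : ℂ)) := by
  set K := Icc δ₁ δ₂ ×ˢ Icc a b
  set F := doubleLayerFourierIntegrand γ n μ x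
  have hF := integrable_doubleLayerFourierIntegrand hγ hn hμ hδ₁ δ₂ a b x
  have hkernel : ∀ p ∈ K, ((1 / (2 * π) ^ 2 : ℝ) : ℂ) * ∫ k, F k p =
      (((⟪x - γ p.2, n p.2⟫_ℝ / (2 * p.1)) *
        (Real.exp (-‖x - γ p.2‖ ^ 2 / (4 * p.1)) / (4 * π * p.1)) * μ p.2 : ℝ) : ℂ) := by
    rintro ⟨t, θ⟩ ⟨ht, -⟩
    simp only [F, doubleLayerFourierIntegrand, integral_const_mul, ofReal_mul _ (μ θ),
      heatKernel_normalDeriv_eq_integral hV (hδ₁.trans_le ht.1)]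
    ring
  calc _ = ∫ t in δ₁..δ₂, ∫ θ in a..b, ((1 / (2 * π) ^ 2 : ℝ) : ℂ) * ∫ k, F k (t, θ) := by
        simp only [← intervalIntegral.integral_ofReal]
        refine intervalIntegral.integral_congr fun t ht => ?_
        refine intervalIntegral.integral_congr fun θ hθ => ?_
        rw [uIcc_of_le hδ₁₂] at ht
        rw [uIcc_of_le hab] at hθ
        exact (hkernel (t, θ) ⟨ht, hθ⟩).symm
    _ = ((1 / (2 * π) ^ 2 : ℝ) : ℂ) * ∫ p in K, ∫ k, F k p := by
        rw [intervalIntegral_intervalIntegral_eq_setIntegral_prod hδ₁₂ hab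
          (hF.integral_prod_right.const_mul _), integral_const_mul]
    _ = ((1 / (2 * π) ^ 2 : ℝ) : ℂ) * ∫ k, ∫ p in K, F k p := by
        rw [← integral_integral_swap (f := F) hF]
    _ = _ := by
        congr 1
        refine integral_congr_ae (ae_of_all _ fun k => ?_)
        dsimp only
        rw [← intervalIntegral_doubleLayerFourierIntegrand,
          intervalIntegral_intervalIntegral_eq_setIntegral_prod hδ₁₂ hab]
        exact ((continuous_doubleLayerFourierIntegrand hγ hn hμ x).comp
          (Continuous.prodMk_right k)).continuousOn.integrableOn_compact
          (isCompact_Icc.prod isCompact_Icc)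

end DoubleLayer

theorem inner_planePt (k : EuclideanSpace ℝ (Fin 2)) (a b : ℝ) :
    ⟪k, planePt a b⟫_ℝ = k 0 * a + k 1 * b := by
  simp [planePt, PiLp.inner_apply, Fin.sum_univ_two, mul_comm]

theorem Continuous.planePt {f g : ℝ → ℝ} (hf : Continuous f) (hg : Continuous g) :
    Continuous fun θ => planePt (f θ) (g θ) :=
  (PiLp.continuous_toLp 2 _).comp <| continuous_pi <| Fin.forall_fin_two.mpr ⟨hf, hg⟩

theorem near_history_double_layer_fourier_rep_general
    (γ₁ γ₂ : ℝ → ℝ) (hγ₁ : ContDiff ℝ 1 γ₁) (hγ₂ : ContDiff ℝ 1 γ₂)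
    (μ : ℝ → ℝ) (hμ : Continuous μ)
    (δ₁ δ₂ : ℝ) (hδ₁ : 0 < δ₁) (hδ₁₂ : δ₁ < δ₂) (x : EuclideanSpace ℝ (Fin 2)) :
    ((∫ t in δ₁..δ₂, ∫ θ in (0:ℝ)..(2 * Real.pi),
        ((inner ℝ (x - planePt (γ₁ θ) (γ₂ θ)) (planePt (deriv γ₂ θ) (-(deriv γ₁ θ))) : ℝ)
            / (2 * t)) *
          (Real.exp (-‖x - planePt (γ₁ θ) (γ₂ θ)‖ ^ 2 / (4 * t)) / (4 * Real.pi * t)) *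
          μ θ : ℝ) : ℂ)
      = ((1 / (2 * Real.pi) ^ 2 : ℝ) : ℂ) *
        ∫ k : EuclideanSpace ℝ (Fin 2),
          (((Real.exp (-‖k‖ ^ 2 * δ₁) - Real.exp (-‖k‖ ^ 2 * δ₂)) / ‖k‖ ^ 2 : ℝ) : ℂ) *
          Complex.exp (Complex.I * ((inner ℝ k x : ℝ) : ℂ)) *
          ((-Complex.I) *
            (((k 0 : ℝ) : ℂ) *
              (∫ θ in (0:ℝ)..(2 * Real.pi),
                Complex.exp (-(Complex.I * ((inner ℝ k (planePt (γ₁ θ) (γ₂ θ)) : ℝ) : ℂ))) *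
                ((μ θ * deriv γ₂ θ : ℝ) : ℂ)) +
             ((k 1 : ℝ) : ℂ) *
              (∫ θ in (0:ℝ)..(2 * Real.pi),
                Complex.exp (-(Complex.I * ((inner ℝ k (planePt (γ₁ θ) (γ₂ θ)) : ℝ) : ℂ))) *
                ((μ θ * (-(deriv γ₁ θ)) : ℝ) : ℂ)))) := by
  have hγ := hγ₁.continuous.planePt hγ₂.continuous
  have hn : Continuous fun θ => planePt (deriv γ₂ θ) (-deriv γ₁ θ) :=
    (hγ₂.continuous_deriv le_rfl).planePt (hγ₁.continuous_deriv le_rfl).neg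
  rw [intervalIntegral_heatDoubleLayer_eq_integral_fourier finrank_euclideanSpace_fin hγ hn hμ
    hδ₁ hδ₁₂.le Real.two_pi_pos.le x]
  congr 1
  refine integral_congr_ae (ae_of_all _ fun k => ?_)
  dsimp only
  congr 2
  have hint : ∀ f : ℝ → ℝ, Continuous f → IntervalIntegrable
      (fun θ => cexp (-(I * ⟪k, planePt (γ₁ θ) (γ₂ θ)⟫_ℝ)) * ((μ θ * f θ : ℝ) : ℂ))
      volume 0 (2 * π) := fun f hf => (by fun_prop : Continuous _).intervalIntegrable _ _
  rw [← intervalIntegral.integral_const_mul, ← intervalIntegral.integral_const_mul,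
    ← intervalIntegral.integral_add ((hint _ (hγ₂.continuous_deriv le_rfl)).const_mul _)
      ((hint (fun θ => -deriv γ₁ θ) (hγ₁.continuous_deriv le_rfl).neg).const_mul _)]
  refine intervalIntegral.integral_congr fun θ _ => ?_
  simp only [inner_planePt]
  push_cast
  ring

/-- Fourier representation of the near-history double layer heat potential for a
closed C¹ curve `γ = (γ₁, γ₂)` (2π-periodic) with unnormalized normal
`n(θ) = (γ₂'(θ), -γ₁'(θ))` and continuous 2π-periodic density `μ`. -/
theorem near_history_double_layer_fourier_rep
    (γ₁ γ₂ : ℝ → ℝ) (hγ₁ : ContDiff ℝ 1 γ₁) (hγ₂ : ContDiff ℝ 1 γ₂)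
    (hγ₁per : Function.Periodic γ₁ (2 * Real.pi))
    (hγ₂per : Function.Periodic γ₂ (2 * Real.pi))
    (μ : ℝ → ℝ) (hμ : Continuous μ) (hμper : Function.Periodic μ (2 * Real.pi))
    (δ₁ δ₂ : ℝ) (hδ₁ : 0 < δ₁) (hδ₁₂ : δ₁ < δ₂) (x : EuclideanSpace ℝ (Fin 2)) :
    ((∫ t in δ₁..δ₂, ∫ θ in (0:ℝ)..(2 * Real.pi),
        ((inner ℝ (x - planePt (γ₁ θ) (γ₂ θ)) (planePt (deriv γ₂ θ) (-(deriv γ₁ θ))) : ℝ)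
            / (2 * t)) *
          (Real.exp (-‖x - planePt (γ₁ θ) (γ₂ θ)‖ ^ 2 / (4 * t)) / (4 * Real.pi * t)) *
          μ θ : ℝ) : ℂ)
      = ((1 / (2 * Real.pi) ^ 2 : ℝ) : ℂ) *
        ∫ k : EuclideanSpace ℝ (Fin 2),
          (((Real.exp (-‖k‖ ^ 2 * δ₁) - Real.exp (-‖k‖ ^ 2 * δ₂)) / ‖k‖ ^ 2 : ℝ) : ℂ) *
          Complex.exp (Complex.I * ((inner ℝ k x : ℝ) : ℂ)) *
          ((-Complex.I) *
            (((k 0 : ℝ) : ℂ) *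
              (∫ θ in (0:ℝ)..(2 * Real.pi),
                Complex.exp (-(Complex.I * ((inner ℝ k (planePt (γ₁ θ) (γ₂ θ)) : ℝ) : ℂ))) *
                ((μ θ * deriv γ₂ θ : ℝ) : ℂ)) +
             ((k 1 : ℝ) : ℂ) *
              (∫ θ in (0:ℝ)..(2 * Real.pi),
                Complex.exp (-(Complex.I * ((inner ℝ k (planePt (γ₁ θ) (γ₂ θ)) : ℝ) : ℂ))) *
                ((μ θ * (-(deriv γ₁ θ)) : ℝ) : ℂ)))) :=
  near_history_double_layer_fourier_rep_general γ₁ γ₂ hγ₁ hγ₂ μ hμ δ₁ δ₂ hδ₁ hδ₁₂ x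
end
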